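/- Let π: B → A be a G-equivariant isogeny of abelian varieties with kernel Δ, and let σ ∈ G be a pseudoreflection. Write E_{σ,B} = im(1-σ) ⊆ B, D_{σ,B} = im(1 + σ + ⋯ + σ^{r-1}) ⊆ B, F_{σ,B} = E_{σ,B} ∩ D_{σ,B}, and similarly for A. If π restricted to E_{σ,B} is injective and π maps F_{σ,B} onto F_{σ,A}, then Δ ⊆ D_{σ,B}. -/

import Mathlib

noncomputable section

abbrev Vn (n : ℕ) := Fin n → ℂ

def IsLattice {n : ℕ} (Λ : AddSubgroup (Vn n)) : Prop :=
  DiscreteTopology Λ ∧ Submodule.span ℝ (Λ : Set (Vn n)) = ⊤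

/-- A pseudoreflection: a linear automorphism whose fixed subspace is a hyperplane. -/
def IsPseudoreflection {n : ℕ} (g : Vn n ≃ₗ[ℂ] Vn n) : Prop :=
  Module.finrank ℂ
    (LinearMap.range ((1 : Vn n →ₗ[ℂ] Vn n) - (g : Vn n →ₗ[ℂ] Vn n))) = 1

theorem pow_mem_lattice {n : ℕ} (Λ : AddSubgroup (Vn n)) (f : Vn n ≃ₗ[ℂ] Vn n)
    (hf : ∀ v, v ∈ Λ ↔ f v ∈ Λ) (i : ℕ) :
    ∀ v ∈ Λ, (((f : Vn n →ₗ[ℂ] Vn n)) ^ i) v ∈ Λ := by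
  induction i with
  | zero => intro v hv; simpa using hv
  | succ i ih =>
      intro v hv
      rw [pow_succ, Module.End.mul_apply]
      exact ih _ ((hf v).1 hv)

/-- The endomorphism of the complex torus `ℂ^n ⧸ Λ` induced by `g : ℂ^n →ₗ ℂ^n`. -/
def indMap {n : ℕ} (Λ : AddSubgroup (Vn n)) (g : Vn n →ₗ[ℂ] Vn n)
    (h : ∀ v ∈ Λ, g v ∈ Λ) : (Vn n ⧸ Λ) →+ (Vn n ⧸ Λ) :=
  QuotientAddGroup.map Λ Λ g.toAddMonoidHom h

/-!
Since `r` is invertible in `ℂ`, the telescoping identity `(1 - σ) S + N = r`, with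
`N = ∑_{i<r} σ^i` and `S = ∑_{i<r} ∑_{j<i} σ^j`, gives `ℂ^n = im (1 - σ) + im N`, hence
`B = E_{σ,B} + D_{σ,B}`. Write `z ∈ Δ` as `x + y` accordingly. Then `π x = -π y` lies in
`F_{σ,A}`, so it is `π w` for some `w ∈ F_{σ,B}`; injectivity on `E_{σ,B}` gives `w = x`,
so `x`, and hence `z`, lies in `D_{σ,B}`.
-/

theorem one_sub_mul_sum_geom_sum_add_geom_sum {R : Type*} [Ring R] (x : R) (r : ℕ) :
    (1 - x) * ∑ i ∈ Finset.range r, ∑ j ∈ Finset.range i, x ^ j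
      + ∑ i ∈ Finset.range r, x ^ i = r := by
  rw [Finset.mul_sum]
  simp only [mul_neg_geom_sum, Finset.sum_sub_distrib, Finset.sum_const, Finset.card_range,
    nsmul_one, sub_add_cancel]

theorem LinearMap.range_one_sub_sup_range_geom_sum_eq_top {K M : Type*} [Field K]
    [AddCommGroup M] [Module K M] (F : Module.End K M) {r : ℕ} (hr : (r : K) ≠ 0) :
    LinearMap.range (1 - F) ⊔ LinearMap.range (∑ i ∈ Finset.range r, F ^ i) = ⊤ := by
  refine eq_top_iff.2 fun v _ => Submodule.mem_sup.2 ?_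
  set S := ∑ i ∈ Finset.range r, ∑ j ∈ Finset.range i, F ^ j
  refine ⟨(1 - F) (S ((r : K)⁻¹ • v)), LinearMap.mem_range_self _ _,
    (∑ i ∈ Finset.range r, F ^ i) ((r : K)⁻¹ • v), LinearMap.mem_range_self _ _, ?_⟩
  have key : ((1 - F) * S + ∑ i ∈ Finset.range r, F ^ i) ((r : K)⁻¹ • v) = v := by
    rw [one_sub_mul_sum_geom_sum_add_geom_sum, Module.End.natCast_apply,
      ← Nat.cast_smul_eq_nsmul K, smul_smul, mul_inv_cancel₀ hr, one_smul]
  exact key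

theorem AddSubgroup.ker_le_of_sup_eq_top {B A : Type*} [AddCommGroup B] [AddCommGroup A]
    (π : B →+ A) {EB DB : AddSubgroup B} {EA DA : AddSubgroup A} (hED : EB ⊔ DB = ⊤)
    (hE : EB.map π ≤ EA) (hD : DB.map π ≤ DA)
    (hinj : ∀ x ∈ EB, ∀ y ∈ EB, π x = π y → x = y)
    (hsurj : ∀ z ∈ EA ⊓ DA, ∃ w ∈ EB ⊓ DB, π w = z) :
    π.ker ≤ DB := by
  intro z hz
  obtain ⟨x, hx, y, hy, rfl⟩ := AddSubgroup.mem_sup.1 (hED ▸ AddSubgroup.mem_top z)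
  have hπx : π x = -π y := eq_neg_of_add_eq_zero_left (by rwa [← map_add])
  have hπxD : π x ∈ DA := hπx ▸ DA.neg_mem (hD (AddSubgroup.mem_map_of_mem π hy))
  obtain ⟨w, ⟨hwE, hwD⟩, hw⟩ := hsurj _ ⟨hE (AddSubgroup.mem_map_of_mem π hx), hπxD⟩
  obtain rfl : w = x := hinj w hwE x hx hw
  exact DB.add_mem hwD hy

theorem indMap_range_sup_eq_top {n : ℕ} (Λ : AddSubgroup (Vn n)) {g₁ g₂ : Vn n →ₗ[ℂ] Vn n}
    (h₁ : ∀ v ∈ Λ, g₁ v ∈ Λ) (h₂ : ∀ v ∈ Λ, g₂ v ∈ Λ)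
    (hg : LinearMap.range g₁ ⊔ LinearMap.range g₂ = ⊤) :
    (indMap Λ g₁ h₁).range ⊔ (indMap Λ g₂ h₂).range = ⊤ := by
  refine eq_top_iff.2 fun z _ => ?_
  obtain ⟨v, rfl⟩ := QuotientAddGroup.mk_surjective z
  obtain ⟨_, ⟨u₁, rfl⟩, _, ⟨u₂, rfl⟩, rfl⟩ := Submodule.mem_sup.1 (hg ▸ Submodule.mem_top (x := v))
  exact AddSubgroup.mem_sup.2 ⟨_, ⟨u₁, rfl⟩, _, ⟨u₂, rfl⟩, rfl⟩

theorem map_indMap_range_le {n : ℕ} {ΛB ΛA : AddSubgroup (Vn n)} (hBA : ΛB ≤ ΛA)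
    (g : Vn n →ₗ[ℂ] Vn n) (hB : ∀ v ∈ ΛB, g v ∈ ΛB) (hA : ∀ v ∈ ΛA, g v ∈ ΛA) :
    (indMap ΛB g hB).range.map
        (QuotientAddGroup.map ΛB ΛA (AddMonoidHom.id (Vn n)) (fun _ hv => hBA hv))
      ≤ (indMap ΛA g hA).range := by
  rintro _ ⟨_, ⟨z, rfl⟩, rfl⟩
  obtain ⟨v, rfl⟩ := QuotientAddGroup.mk_surjective z
  exact ⟨v, rfl⟩

/-- Let `π : B → A` be a `G`-equivariant isogeny of abelian varieties with
kernel `Δ` (here `B = ℂ^n ⧸ Λ_B`, `A = ℂ^n ⧸ Λ_A` with `Λ_B ⊆ Λ_A` and `π` the natural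
projection), and let `σ ∈ G` be a pseudoreflection, of order `r`, acting compatibly on `B`
and `A`.  Write `E_{σ,B} = im (1 - σ) ⊆ B`, `D_{σ,B} = im (1 + σ + ⋯ + σ^(r-1)) ⊆ B`,
`F_{σ,B} = E_{σ,B} ∩ D_{σ,B}`, and similarly for `A`.  If `π` restricted to `E_{σ,B}` is
injective and `π` maps `F_{σ,B}` onto `F_{σ,A}`, then `Δ ⊆ D_{σ,B}`. -/
theorem kernel_of_isogeny_in_Dsigma {n r : ℕ} (hr : 0 < r)
    (ΛB ΛA : AddSubgroup (Vn n)) (hBA : ΛB ≤ ΛA)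
    (f : Vn n ≃ₗ[ℂ] Vn n)
    (hfB : ∀ v, v ∈ ΛB ↔ f v ∈ ΛB) (hfA : ∀ v, v ∈ ΛA ↔ f v ∈ ΛA) :
    let π : (Vn n ⧸ ΛB) →+ (Vn n ⧸ ΛA) :=
      QuotientAddGroup.map ΛB ΛA (AddMonoidHom.id (Vn n)) (fun v hv => hBA hv)
    let EB := (indMap ΛB ((1 : Vn n →ₗ[ℂ] Vn n) - f)
      (fun v hv => ΛB.sub_mem hv ((hfB v).1 hv))).range
    let DB := (indMap ΛB (∑ i ∈ Finset.range r, ((f : Vn n →ₗ[ℂ] Vn n)) ^ i)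
      (fun v hv => by
        simpa [LinearMap.sum_apply] using AddSubgroup.sum_mem ΛB
          (fun i _ => pow_mem_lattice ΛB f hfB i v hv))).range
    let EA := (indMap ΛA ((1 : Vn n →ₗ[ℂ] Vn n) - f)
      (fun v hv => ΛA.sub_mem hv ((hfA v).1 hv))).range
    let DA := (indMap ΛA (∑ i ∈ Finset.range r, ((f : Vn n →ₗ[ℂ] Vn n)) ^ i)
      (fun v hv => by
        simpa [LinearMap.sum_apply] using AddSubgroup.sum_mem ΛA
          (fun i _ => pow_mem_lattice ΛA f hfA i v hv))).range
    (∀ x ∈ EB, ∀ y ∈ EB, π x = π y → x = y) →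
    (∀ z ∈ EA ⊓ DA, ∃ w ∈ EB ⊓ DB, π w = z) →
    π.ker ≤ DB := by
  intro π EB DB EA DA hinj hsurj
  have hdecomp := LinearMap.range_one_sub_sup_range_geom_sum_eq_top (f : Vn n →ₗ[ℂ] Vn n)
    (Nat.cast_ne_zero.2 hr.ne' : (r : ℂ) ≠ 0)
  exact AddSubgroup.ker_le_of_sup_eq_top π (indMap_range_sup_eq_top ΛB _ _ hdecomp)
    (map_indMap_range_le hBA _ _ _) (map_indMap_range_le hBA _ _ _) hinj hsurj
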